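/- arXiv:1204.2430 — 3 statements merged into one kernel-verified Lean document; each statement's English description precedes it below -/
import Mathlib

section
/- The polynomial t^2 - t + 1 is the unique degree-2 Alexander polynomial having a root which is a root of unity. Precisely: if p(t) = a t^2 + b t + a is a degree-2 integer polynomial with p(1) = ±1 (so 2a + b = ±1) and some root of p is a root of unity, then p(t) = ±(t^2 - t + 1). -/
/-!
Dividing `a z² + b z + a = 0` by `z` gives `a (z + z⁻¹) = -b`, so `w = z + z⁻¹` is rational.
For a root of unity `z`, `w` is also an algebraic integer (as `z` and `z⁻¹` are), hence an
integer `m`, and `|m| ≤ 2` since `|z| = 1`. Then `b = -a m` and `2a + b = a (2 - m) = ±1` force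
`m = 1` and `a = ±1`.
-/

lemma isIntegral_add_inv_of_pow_eq_one {K : Type*} [Field K] {z : K} {n : ℕ} (hn : 0 < n)
    (hz : z ^ n = 1) : IsIntegral ℤ (z + z⁻¹) := by
  have hz' : z⁻¹ ^ n = 1 := by rw [inv_pow, hz, inv_one]
  exact (IsIntegral.of_pow hn (hz ▸ isIntegral_one)).add
    (IsIntegral.of_pow hn (hz' ▸ isIntegral_one))

lemma Rat.exists_int_eq_of_isIntegral_cast {K : Type*} [Field K] [CharZero K] {q : ℚ}
    (hq : IsIntegral ℤ (q : K)) : ∃ m : ℤ, q = m := by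
  rw [← eq_ratCast (algebraMap ℚ K), isIntegral_algebraMap_iff (algebraMap ℚ K).injective] at hq
  obtain ⟨m, hm⟩ := IsIntegrallyClosed.isIntegral_iff.mp hq
  exact ⟨m, hm.symm⟩

lemma Complex.abs_le_two_of_add_inv_eq_intCast {z : ℂ} {n : ℕ} (hn : n ≠ 0) (hz : z ^ n = 1)
    {m : ℤ} (hm : z + z⁻¹ = m) : |m| ≤ 2 := by
  have hnorm : ‖z‖ = 1 := norm_eq_one_of_pow_eq_one hz hn
  have : ‖z + z⁻¹‖ ≤ 2 := by
    calc ‖z + z⁻¹‖ ≤ ‖z‖ + ‖z⁻¹‖ := norm_add_le _ _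
      _ = 2 := by rw [norm_inv, hnorm]; norm_num
  rw [hm, norm_intCast] at this
  exact_mod_cast this

/-- If `p(t) = a t² + b t + a` is a degree-2 integer polynomial with `p(1) = ±1`
(i.e. `2a + b = ±1`) having a root that is a root of unity, then
`p(t) = ±(t² - t + 1)`. -/
theorem alexander_deg_two_root_of_unity (a b : ℤ) (ha : a ≠ 0)
    (h1 : 2 * a + b = 1 ∨ 2 * a + b = -1)
    (hroot : ∃ (z : ℂ) (n : ℕ), 0 < n ∧ z ^ n = 1 ∧
      (a : ℂ) * z ^ 2 + (b : ℂ) * z + (a : ℂ) = 0) :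
    (a = 1 ∧ b = -1) ∨ (a = -1 ∧ b = 1) := by
  obtain ⟨z, n, hn, hzn, heq⟩ := hroot
  have hz0 : z ≠ 0 := by rintro rfl; simp [hn.ne'] at hzn
  have hw : z + z⁻¹ = ((-b / a : ℚ) : ℂ) := by
    push_cast
    field_simp
    linear_combination heq
  obtain ⟨m, hm⟩ := Rat.exists_int_eq_of_isIntegral_cast (K := ℂ)
    (hw ▸ isIntegral_add_inv_of_pow_eq_one hn hzn)
  have hbm : b = -(a * m) := by
    rw [div_eq_iff (by exact_mod_cast ha)] at hm
    exact_mod_cast (by linarith : (b : ℚ) = -(a * m))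
  obtain ⟨hlo, hhi⟩ := abs_le.mp <|
    Complex.abs_le_two_of_add_inv_eq_intCast hn.ne' hzn (by rw [hw, hm, Rat.cast_intCast])
  subst hbm
  interval_cases m <;> omega
end

section
/- Let t₁ be the root of Δ₁(t) = t^4 - 7t^3 + 11t^2 - 7t + 1 of largest absolute value and t₂ the root of Δ₂(t) = t^4 + 7t^3 - 15t^2 + 7t + 1 of largest absolute value. Then |t₁|^6 = |t₂|^8. Equivalently, 6·ln m(Δ₂) = 8·ln m(Δ₁), where m denotes the Mahler measure. -/
open Polynomial

/-- The Mahler measure of a complex polynomial: `exp (∫_{S¹} ln |p(z)|)` with the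
circle normalized to total measure 1. -/
noncomputable def mahlerMeasureCircle (p : Polynomial ℂ) : ℝ :=
  Real.exp (∫ t in (0:ℝ)..1,
    Real.log (‖p.eval (Complex.exp (2 * Real.pi * t * Complex.I))‖))

/-!
Both polynomials are palindromic quartics, so each is a product of two quadratics
`X² - a X + 1 = (X - z) (X - z⁻¹)` with `z + z⁻¹ = a`. By Jensen's formula such a factor has
logarithmic Mahler measure `log⁺ ‖z‖ + log⁺ ‖z‖⁻¹ = |log ‖z‖|`, which vanishes when `a` is real
with `|a| ≤ 2`. The factors of `Δ₁` have `a = (7 ± √13) / 2`, those of `Δ₂` have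
`a = (-7 ± 3√13) / 2`, and in each case exactly one factor has `|a| > 2`.
If `z` and `w` are roots of these two factors, then `z⁴` and `(-w)³` both satisfy
`y + y⁻¹ = (679 + 189√13) / 2`, so `4 |log ‖z‖| = 3 |log ‖w‖|`.
-/

open Real

theorem Real.posLog_add_posLog_inv (x : ℝ) : log⁺ x + log⁺ x⁻¹ = |log x| := by
  rw [posLog_apply, posLog_apply, log_inv]
  rcases le_total 0 (log x) with h | h
  · simp [h, abs_of_nonneg h]
  · simp [h, abs_of_nonpos h]

namespace Complex

theorem exists_ne_zero_add_inv_eq (a : ℂ) : ∃ z : ℂ, z ≠ 0 ∧ z + z⁻¹ = a := by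
  obtain ⟨z, hz⟩ := exists_root (f := X ^ 2 - C a * X + 1) (by
    rw [show (X ^ 2 - C a * X + 1 : ℂ[X]).degree = 2 by compute_degree!]; norm_num)
  simp only [IsRoot, eval_add, eval_sub, eval_pow, eval_mul, eval_C, eval_X, eval_one] at hz
  have hz₀ : z ≠ 0 := by rintro rfl; simp at hz
  refine ⟨z, hz₀, ?_⟩
  field_simp
  linear_combination hz

theorem exists_norm_eq_one_add_inv_eq {a : ℝ} (ha : |a| ≤ 2) :
    ∃ z : ℂ, ‖z‖ = 1 ∧ z + z⁻¹ = a := by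
  refine ⟨exp (arccos (a / 2) * I), norm_exp_ofReal_mul_I _, ?_⟩
  have hcos : Real.cos (arccos (a / 2)) = a / 2 :=
    cos_arccos (by linarith [neg_abs_le a]) (by linarith [le_abs_self a])
  rw [← exp_neg, ← neg_mul, ← two_cos, ← ofReal_cos, hcos]
  push_cast
  ring

theorem abs_log_norm_eq_of_add_inv_eq {y u : ℂ} (hy : y ≠ 0) (hu : u ≠ 0)
    (h : y + y⁻¹ = u + u⁻¹) : |Real.log ‖y‖| = |Real.log ‖u‖| := by
  have hfactor : (y - u) * (y * u - 1) = 0 := by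
    field_simp at h
    linear_combination h
  rcases mul_eq_zero.1 hfactor with heq | hinv
  · rw [sub_eq_zero.1 heq]
  · rw [eq_inv_of_mul_eq_one_left (sub_eq_zero.1 hinv), norm_inv, Real.log_inv, abs_neg]

end Complex

namespace Polynomial

theorem X_sub_C_mul_X_sub_C_inv {z : ℂ} (hz : z ≠ 0) :
    (X - C z) * (X - C z⁻¹) = X ^ 2 - C (z + z⁻¹) * X + 1 := by
  have hC : C z * C z⁻¹ = (1 : ℂ[X]) := by rw [← C_mul, mul_inv_cancel₀ hz, C_1]
  rw [C_add]
  linear_combination hC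

theorem logMahlerMeasure_X_sq_sub_C_add_inv_mul_X_add_one {z : ℂ} (hz : z ≠ 0) :
    (X ^ 2 - C (z + z⁻¹) * X + 1).logMahlerMeasure = |log ‖z‖| := by
  rw [← X_sub_C_mul_X_sub_C_inv hz, logMahlerMeasure_mul_eq_add_logMahlerMeasure
    (mul_ne_zero (X_sub_C_ne_zero z) (X_sub_C_ne_zero _)), logMahlerMeasure_X_sub_C,
    logMahlerMeasure_X_sub_C, norm_inv, posLog_add_posLog_inv]

theorem palindromic_quartic_eq_mul {R : Type*} [CommRing R] (a b : R) :
    X ^ 4 - C (a + b) * X ^ 3 + C (a * b + 2) * X ^ 2 - C (a + b) * X + 1 =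
      (X ^ 2 - C a * X + 1) * (X ^ 2 - C b * X + 1) := by
  simp only [C_add, C_mul, C_ofNat]
  ring

theorem logMahlerMeasure_palindromic_quartic {a b : ℝ} (hb : |b| ≤ 2) {z : ℂ} (hz : z ≠ 0)
    (ha : z + z⁻¹ = a) :
    (X ^ 4 - C ((a + b : ℝ) : ℂ) * X ^ 3 + C ((a * b + 2 : ℝ) : ℂ) * X ^ 2 -
      C ((a + b : ℝ) : ℂ) * X + 1).logMahlerMeasure = |log ‖z‖| := by
  obtain ⟨w, hw₁, hwb⟩ := Complex.exists_norm_eq_one_add_inv_eq hb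
  have hw : w ≠ 0 := norm_ne_zero_iff.1 (by rw [hw₁]; exact one_ne_zero)
  have hmonic (c : ℂ) : (X ^ 2 - C c * X + 1 : ℂ[X]).Monic := by monicity!
  push_cast
  rw [palindromic_quartic_eq_mul, ← ha, ← hwb,
    logMahlerMeasure_mul_eq_add_logMahlerMeasure ((hmonic _).mul (hmonic _)).ne_zero,
    logMahlerMeasure_X_sq_sub_C_add_inv_mul_X_add_one hz,
    logMahlerMeasure_X_sq_sub_C_add_inv_mul_X_add_one hw, hw₁, log_one, abs_zero, add_zero]

end Polynomial

theorem log_mahlerMeasureCircle (p : ℂ[X]) :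
    log (mahlerMeasureCircle p) = p.logMahlerMeasure := by
  have hπ : 2 * π ≠ 0 := by positivity
  have hsubst := intervalIntegral.integral_comp_mul_left (a := 0) (b := 1)
    (fun θ => log ‖eval (circleMap 0 1 θ) p‖) hπ
  rw [mul_zero, mul_one] at hsubst
  rw [mahlerMeasureCircle, log_exp, logMahlerMeasure_def, circleAverage_def, ← hsubst]
  congr! 4 with t
  simp only [circleMap_zero, Complex.ofReal_one, one_mul]
  push_cast
  ring_nf

/-- `6 · ln m(Δ₂) = 8 · ln m(Δ₁)` for the Alexander polynomials of `9₄₈` and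
`12n642`; equivalently `|t₁|⁶ = |t₂|⁸` for the largest roots. -/
theorem six_log_mahler_eq_eight_log_mahler :
    6 * Real.log (mahlerMeasureCircle (X ^ 4 + 7 * X ^ 3 - 15 * X ^ 2 + 7 * X + 1)) =
      8 * Real.log (mahlerMeasureCircle (X ^ 4 - 7 * X ^ 3 + 11 * X ^ 2 - 7 * X + 1)) := by
  have h13 : √13 ^ 2 = 13 := sq_sqrt (by norm_num)
  have h13_ge : 3 ≤ √13 := le_sqrt_of_sq_le (by norm_num)
  have h13_le : 3 * √13 ≤ 11 := by nlinarith
  set a₁ : ℝ := (7 + √13) / 2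
  set a₂ : ℝ := (-7 - 3 * √13) / 2
  obtain ⟨z, hz, hza⟩ := Complex.exists_ne_zero_add_inv_eq a₁
  obtain ⟨w, hw, hwa⟩ := Complex.exists_ne_zero_add_inv_eq a₂
  have hΔ₁ :
      (X ^ 4 - 7 * X ^ 3 + 11 * X ^ 2 - 7 * X + 1 : ℂ[X]).logMahlerMeasure = |log ‖z‖| := by
    have := logMahlerMeasure_palindromic_quartic (b := (7 - √13) / 2)
      (abs_le.2 ⟨by linarith, by linarith⟩) hz hza
    rw [show a₁ + (7 - √13) / 2 = 7 by ring,
      show a₁ * ((7 - √13) / 2) + 2 = 11 by linear_combination (-1 / 4) * h13] at this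
    convert this using 2
    simp only [Complex.ofReal_ofNat, map_ofNat]
  have hΔ₂ :
      (X ^ 4 + 7 * X ^ 3 - 15 * X ^ 2 + 7 * X + 1 : ℂ[X]).logMahlerMeasure = |log ‖w‖| := by
    have := logMahlerMeasure_palindromic_quartic (b := (-7 + 3 * √13) / 2)
      (abs_le.2 ⟨by linarith, by linarith⟩) hw hwa
    rw [show a₂ + (-7 + 3 * √13) / 2 = -7 by ring,
      show a₂ * ((-7 + 3 * √13) / 2) + 2 = -15 by linear_combination (-9 / 4) * h13] at this
    convert this using 2
    push_cast
    simp only [map_neg, map_ofNat]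
    ring
  have hpow : z ^ 4 + (z ^ 4)⁻¹ = (-w) ^ 3 + ((-w) ^ 3)⁻¹ := by
    have hz4 : z ^ 4 + (z ^ 4)⁻¹ = ((z + z⁻¹) ^ 2 - 2) ^ 2 - 2 := by field_simp; ring
    have hw3 : (-w) ^ 3 + ((-w) ^ 3)⁻¹ = -((w + w⁻¹) ^ 3 - 3 * (w + w⁻¹)) := by
      field_simp; ring
    have ha : (a₁ ^ 2 - 2) ^ 2 - 2 = -(a₂ ^ 3 - 3 * a₂) := by
      linear_combination (√13 ^ 2 / 16 - 13 / 8 * √13 - 87 / 16) * h13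
    rw [hz4, hw3, hza, hwa]
    exact_mod_cast ha
  have hlog := Complex.abs_log_norm_eq_of_add_inv_eq (pow_ne_zero 4 hz)
    (pow_ne_zero 3 (neg_ne_zero.2 hw)) hpow
  simp only [norm_pow, norm_neg, log_pow, abs_mul, Nat.cast_ofNat, Nat.abs_ofNat] at hlog
  rw [log_mahlerMeasureCircle, log_mahlerMeasureCircle, hΔ₁, hΔ₂]
  linarith
end

section
/- Let x₁ = (7 − √13)/2 and x₂ = (−7 + 3√13)/2, and set φ₁ = arccos(x₁/2), φ₂ = arccos(x₂/2). Then (4φ₁ − 3φ₂)/(2π) is not a rational number with denominator dividing 480; equivalently, e^{i(4φ₁ − 3φ₂)} is not an n-th root of unity for any n ∈ {2, 3, 5, 8, 12, 15, 16, 24}. -/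
set_option maxHeartbeats 1000000

private lemma cb (x : ℝ) (h0 : 0 ≤ x) (h1 : x ≤ 1) :
    1 - x^2/2 - x^4*(5/96) ≤ Real.cos x ∧ Real.cos x ≤ 1 - x^2/2 + x^4*(5/96) := by
  have h := Real.cos_bound (x := x) (by rw [abs_of_nonneg h0]; exact h1)
  rw [abs_of_nonneg h0, abs_sub_le_iff] at h
  constructor <;> nlinarith [h.1, h.2]

private lemma cos_step {x lo hi : ℝ} (h0 : 0 ≤ lo) (h : lo ≤ Real.cos x ∧ Real.cos x ≤ hi) :
    2*lo^2 - 1 ≤ Real.cos (2*x) ∧ Real.cos (2*x) ≤ 2*hi^2 - 1 := by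
  rw [Real.cos_two_mul]
  constructor <;> nlinarith [h.1, h.2]

private lemma cos_5565 : 0.848975622525 ≤ Real.cos 0.5565 ∧ Real.cos 0.5565 ≤ 0.849123907971 := by
  have h0 := cb (0.5565/8) (by norm_num) (by norm_num)
  have g0 : (0.997579309747:ℝ) ≤ Real.cos (0.5565/8) ∧ Real.cos (0.5565/8) ≤ 0.997581748847 :=
    ⟨le_trans (by norm_num) h0.1, le_trans h0.2 (by norm_num)⟩
  have h1 := cos_step (by norm_num) g0
  rw [show 2*((0.5565:ℝ)/8) = 0.5565/4 by norm_num] at h1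
  have g1 : (0.990328958470:ℝ) ≤ Real.cos (0.5565/4) ∧ Real.cos (0.5565/4) ≤ 0.990338691266 :=
    ⟨le_trans (by norm_num) h1.1, le_trans h1.2 (by norm_num)⟩
  have h2 := cos_step (by norm_num) g1
  rw [show 2*((0.5565:ℝ)/4) = 0.5565/2 by norm_num] at h2
  have g2 : (0.961502891968:ℝ) ≤ Real.cos (0.5565/2) ∧ Real.cos (0.5565/2) ≤ 0.961541446837 :=
    ⟨le_trans (by norm_num) h2.1, le_trans h2.2 (by norm_num)⟩
  have h3 := cos_step (by norm_num) g2
  rw [show 2*((0.5565:ℝ)/2) = 0.5565 by norm_num] at h3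
  have g3 : (0.848975622525:ℝ) ≤ Real.cos (0.5565) ∧ Real.cos (0.5565) ≤ 0.849123907971 :=
    ⟨le_trans (by norm_num) h3.1, le_trans h3.2 (by norm_num)⟩
  exact g3

private lemma cos_56 : 0.847118364920 ≤ Real.cos 0.56 ∧ Real.cos 0.56 ≤ 0.847270316488 := by
  have h0 := cb (0.56/8) (by norm_num) (by norm_num)
  have g0 : (0.997548749479:ℝ) ≤ Real.cos (0.56/8) ∧ Real.cos (0.56/8) ≤ 0.997551250521 :=
    ⟨le_trans (by norm_num) h0.1, le_trans h0.2 (by norm_num)⟩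
  have h1 := cos_step (by norm_num) g0
  rw [show 2*((0.56:ℝ)/8) = 0.56/4 by norm_num] at h1
  have g1 : (0.990207015174:ℝ) ≤ Real.cos (0.56/4) ∧ Real.cos (0.56/4) ≤ 0.990216994833 :=
    ⟨le_trans (by norm_num) h1.1, le_trans h1.2 (by norm_num)⟩
  have h2 := cos_step (by norm_num) g1
  rw [show 2*((0.56:ℝ)/4) = 0.56/2 by norm_num] at h2
  have g2 : (0.961019865799:ℝ) ≤ Real.cos (0.56/2) ∧ Real.cos (0.56/2) ≤ 0.961059393713 :=
    ⟨le_trans (by norm_num) h2.1, le_trans h2.2 (by norm_num)⟩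
  have h3 := cos_step (by norm_num) g2
  rw [show 2*((0.56:ℝ)/2) = 0.56 by norm_num] at h3
  have g3 : (0.847118364920:ℝ) ≤ Real.cos (0.56) ∧ Real.cos (0.56) ≤ 0.847270316488 :=
    ⟨le_trans (by norm_num) h3.1, le_trans h3.2 (by norm_num)⟩
  exact g3

private lemma cos_30 : 0.955289697281 ≤ Real.cos 0.30 ∧ Real.cos 0.30 ≤ 0.955341692608 := by
  have h0 := cb (0.30/4) (by norm_num) (by norm_num)
  have g0 : (0.997185852050:ℝ) ≤ Real.cos (0.30/4) ∧ Real.cos (0.30/4) ≤ 0.997189147950 :=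
    ⟨le_trans (by norm_num) h0.1, le_trans h0.2 (by norm_num)⟩
  have h1 := cos_step (by norm_num) g0
  rw [show 2*((0.30:ℝ)/4) = 0.30/2 by norm_num] at h1
  have g1 : (0.988759247057:ℝ) ≤ Real.cos (0.30/2) ∧ Real.cos (0.30/2) ≤ 0.988772393579 :=
    ⟨le_trans (by norm_num) h1.1, le_trans h1.2 (by norm_num)⟩
  have h2 := cos_step (by norm_num) g1
  rw [show 2*((0.30:ℝ)/2) = 0.30 by norm_num] at h2
  have g2 : (0.955289697281:ℝ) ≤ Real.cos (0.30) ∧ Real.cos (0.30) ≤ 0.955341692608 :=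
    ⟨le_trans (by norm_num) h2.1, le_trans h2.2 (by norm_num)⟩
  exact g2

private lemma cos_305 : 0.953796986360 ≤ Real.cos 0.305 ∧ Real.cos 0.305 ≤ 0.953852509207 := by
  have h0 := cb (0.305/4) (by norm_num) (by norm_num)
  have g0 : (0.997091208160:ℝ) ≤ Real.cos (0.305/4) ∧ Real.cos (0.305/4) ≤ 0.997094729340 :=
    ⟨le_trans (by norm_num) h0.1, le_trans h0.2 (by norm_num)⟩
  have h1 := cos_step (by norm_num) g0
  rw [show 2*((0.305:ℝ)/4) = 0.305/2 by norm_num] at h1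
  have g1 : (0.988381754779:ℝ) ≤ Real.cos (0.305/2) ∧ Real.cos (0.305/2) ≤ 0.988395798556 :=
    ⟨le_trans (by norm_num) h1.1, le_trans h1.2 (by norm_num)⟩
  have h2 := cos_step (by norm_num) g1
  rw [show 2*((0.305:ℝ)/2) = 0.305 by norm_num] at h2
  have g2 : (0.953796986360:ℝ) ≤ Real.cos (0.305) ∧ Real.cos (0.305) ≤ 0.953852509207 :=
    ⟨le_trans (by norm_num) h2.1, le_trans h2.2 (by norm_num)⟩
  exact g2

private lemma lt_arccos' {x a : ℝ} (haπ : a ≤ Real.pi) (hx : -1 ≤ x) (hx1 : x ≤ 1)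
    (h : x < Real.cos a) : a < Real.arccos x := by
  by_contra hc
  push_neg at hc
  have h2 : Real.cos a ≤ Real.cos (Real.arccos x) :=
    Real.cos_le_cos_of_nonneg_of_le_pi (Real.arccos_nonneg x) haπ hc
  rw [Real.cos_arccos hx hx1] at h2
  linarith

private lemma arccos_lt' {x a : ℝ} (ha0 : 0 ≤ a) (hx : -1 ≤ x) (hx1 : x ≤ 1)
    (h : Real.cos a < x) : Real.arccos x < a := by
  by_contra hc
  push_neg at hc
  have h2 : Real.cos (Real.arccos x) ≤ Real.cos a :=
    Real.cos_le_cos_of_nonneg_of_le_pi ha0 (Real.arccos_le_pi x) hc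
  rw [Real.cos_arccos hx hx1] at h2
  linarith

private lemma key (θ : ℝ) (k m : ℤ) (n : ℕ) (h : (n:ℝ)*θ = k*(2*Real.pi))
    (h1 : 2*(m:ℝ)*Real.pi < (n:ℝ)*θ) (h2 : (n:ℝ)*θ < 2*((m:ℝ)+1)*Real.pi) : False := by
  have hπ := Real.pi_pos
  have hk1 : (m:ℝ) < k := by nlinarith
  have hk2 : (k:ℝ) < (m:ℝ)+1 := by nlinarith
  have hm1 : m < k := by exact_mod_cast hk1
  have hm2 : (k:ℝ) < ((m+1:ℤ):ℝ) := by push_cast; linarith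
  have hm2' : k < m+1 := by exact_mod_cast hm2
  omega

/-- With `φ₁ = arccos(x₁/2)`, `x₁ = (7-√13)/2` and `φ₂ = arccos(x₂/2)`,
`x₂ = (-7+3√13)/2`, the number `e^{i(4φ₁ - 3φ₂)}` is not an `n`-th root of unity
for any `n ∈ {2, 3, 5, 8, 12, 15, 16, 24}`. -/
theorem not_root_of_unity_four_phi_sub_three_phi :
    ∀ n ∈ ({2, 3, 5, 8, 12, 15, 16, 24} : Finset ℕ),
      (Complex.exp (Complex.I *
          (4 * Real.arccos (((7 - Real.sqrt 13) / 2) / 2)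
            - 3 * Real.arccos (((-7 + 3 * Real.sqrt 13) / 2) / 2)))) ^ n ≠ 1 := by
  have hπ3 := Real.pi_gt_d6
  have hπ4 := Real.pi_lt_d6
  have s13l : (3.605551:ℝ) < Real.sqrt 13 := by
    rw [show (3.605551:ℝ) = Real.sqrt (3.605551^2) by
      rw [Real.sqrt_sq]; norm_num]
    exact Real.sqrt_lt_sqrt (by positivity) (by norm_num)
  have s13u : Real.sqrt 13 < 3.605552 := by
    rw [show (3.605552:ℝ) = Real.sqrt (3.605552^2) by
      rw [Real.sqrt_sq]; norm_num]
    exact Real.sqrt_lt_sqrt (by norm_num) (by norm_num)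
  set x₁ : ℝ := ((7 - Real.sqrt 13) / 2) / 2 with hx₁def
  set x₂ : ℝ := ((-7 + 3 * Real.sqrt 13) / 2) / 2 with hx₂def
  have hx₁l : (0.848612:ℝ) < x₁ := by rw [hx₁def]; linarith
  have hx₁u : x₁ < 0.84861225 := by rw [hx₁def]; linarith
  have hx₂l : (0.95416325:ℝ) < x₂ := by rw [hx₂def]; linarith
  have hx₂u : x₂ < 0.954164 := by rw [hx₂def]; linarith
  set φ₁ : ℝ := Real.arccos x₁ with hφ₁def
  set φ₂ : ℝ := Real.arccos x₂ with hφ₂def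
  have hφ₁l : (0.5565:ℝ) < φ₁ :=
    lt_arccos' (by linarith) (by linarith) (by linarith) (by linarith [cos_5565.1])
  have hφ₁u : φ₁ < 0.56 :=
    arccos_lt' (by norm_num) (by linarith) (by linarith) (by linarith [cos_56.2])
  have hφ₂l : (0.30:ℝ) < φ₂ :=
    lt_arccos' (by linarith) (by linarith) (by linarith) (by linarith [cos_30.1])
  have hφ₂u : φ₂ < 0.305 :=
    arccos_lt' (by norm_num) (by linarith) (by linarith) (by linarith [cos_305.2])
  intro n hn heq
  rw [← Complex.exp_nat_mul, Complex.exp_eq_one_iff] at heq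
  obtain ⟨k, hk⟩ := heq
  have him : (n:ℝ) * (4*φ₁ - 3*φ₂) = k * (2*Real.pi) := by
    have h := congrArg Complex.im hk
    simpa using h
  set θ : ℝ := 4*φ₁ - 3*φ₂ with hθdef
  have hθl : (1.311:ℝ) < θ := by rw [hθdef]; linarith
  have hθu : θ < 1.34 := by rw [hθdef]; linarith
  clear hk
  simp only [Finset.mem_insert, Finset.mem_singleton] at hn
  rcases hn with rfl | rfl | rfl | rfl | rfl | rfl | rfl | rfl
  · exact key θ k 0 2 him (by push_cast; linarith) (by push_cast; linarith)
  · exact key θ k 0 3 him (by push_cast; linarith) (by push_cast; linarith)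
  · exact key θ k 1 5 him (by push_cast; linarith) (by push_cast; linarith)
  · exact key θ k 1 8 him (by push_cast; linarith) (by push_cast; linarith)
  · exact key θ k 2 12 him (by push_cast; linarith) (by push_cast; linarith)
  · exact key θ k 3 15 him (by push_cast; linarith) (by push_cast; linarith)
  · exact key θ k 3 16 him (by push_cast; linarith) (by push_cast; linarith)
  · exact key θ k 5 24 him (by push_cast; linarith) (by push_cast; linarith)
end
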